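/- Assume 0 < α < 1, a ≠ c, a + c + j ≠ 0, either (-N < a + c < -j + 1 and |c - a| > j) or ((a + c < -N + 1 or 0 < a + c) and |c - a| < 1), and that the Pochhammer symbols (a+c)_{j+1}, (c-a)_{j+1}, (a-c)_{j+1}, (2a+1)_j, (2c+1)_j, (a)_j, (2a+1+j)_j, (a-c+1)_j, (a+c+j+1)_j, (c)_j, (2c+1+j)_j, (c-a+1)_j are all nonzero. Then the odd-case para-Racah weights satisfy Σ_{s=0}^{j} w_{2s} = 1 - α and Σ_{s=0}^{j} w_{2s+1} = α. -/

import Mathlib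

open Filter Topology Polynomial

noncomputable section

/-- The recurrence coefficient `bₙ` of the para-Racah polynomials, odd case `N = 2j+1`. -/
def bOdd (j : ℕ) (a c α : ℝ) (n : ℕ) : ℝ :=
  if n = j then
    -a ^ 2 - (j : ℝ) * (1 + a - c) * (1 + a + c + j) / 2 + α * (a - c) * (1 + (j : ℝ)) * (a + c + j)
  else if n = j + 1 then
    -a ^ 2 - (j : ℝ) * (1 + a - c) * (1 + a + c + j) / 2
      + (1 - α) * (a - c) * (1 + (j : ℝ)) * (a + c + j)
  else
    -(a * (a + j) + c * (c + j) + (n : ℝ) * ((2 * (j : ℝ) + 1) - n)) / 2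

/-- The recurrence coefficient `uₙ` of the para-Racah polynomials, odd case `N = 2j+1`. -/
def uOdd (j : ℕ) (a c α : ℝ) (n : ℕ) : ℝ :=
  if n = j + 1 then
    α * (1 - α) * (a - c) ^ 2 * (1 + (j : ℝ)) ^ 2 * (a + c + j) ^ 2
  else
    (n : ℝ) * ((2 * (j : ℝ) + 1) + 1 - n) * ((2 * (j : ℝ) + 1) - n + a + c) * ((n : ℝ) - 1 + a + c)
        * (((n : ℝ) - j - 1) ^ 2 - (a - c) ^ 2) /
      (4 * ((2 * (j : ℝ) + 1) - 2 * n) * ((2 * (j : ℝ) + 1) - 2 * n + 2))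

/-- Monic orthogonal polynomial sequence from a three-term recurrence:
`monicOPS b u n = (P_{n-1}, P_n)` with `P₋₁ = 0`, `P₀ = 1`,
`P_{n+1}(y) = (y - bₙ) Pₙ(y) - uₙ P_{n-1}(y)`. -/
def monicOPS (b u : ℕ → ℝ) : ℕ → Polynomial ℝ × Polynomial ℝ
  | 0 => (0, 1)
  | n + 1 =>
    ((monicOPS b u n).2,
      (X - C (b n)) * (monicOPS b u n).2 - C (u n) * (monicOPS b u n).1)

/-- The monic para-Racah polynomial `Pₙ`, odd case `N = 2j+1`. -/
def paraRacahOdd (j : ℕ) (a c α : ℝ) (n : ℕ) : Polynomial ℝ :=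
  (monicOPS (bOdd j a c α) (uOdd j a c α) n).2

/-- The Pochhammer symbol `(z)ₖ = z (z+1) ⋯ (z+k-1)`. -/
def poch (z : ℝ) (k : ℕ) : ℝ := ∏ i ∈ Finset.range k, (z + i)

/-- The quadratic bi-lattice: `y_{2s} = -(s+a)²`, `y_{2s+1} = -(s+c)²`. -/
def biLattice (a c : ℝ) (s : ℕ) : ℝ :=
  if s % 2 = 0 then -(((s / 2 : ℕ) : ℝ) + a) ^ 2 else -(((s / 2 : ℕ) : ℝ) + c) ^ 2

/-- The constant `κ_N`, odd case `N = 2j+1`. -/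
def kappaOdd (j : ℕ) (a c : ℝ) : ℝ :=
  poch (a - c - j) (2 * j + 1) * poch (a + c) (2 * j + 1) /
    (2 * (-1 : ℝ) ^ (j + 1) * (Nat.choose (2 * j) j) * (Nat.factorial j))

/-- The weights of the para-Racah polynomials, odd case `N = 2j+1`. -/
def wOdd (j : ℕ) (a c α : ℝ) (s : ℕ) : ℝ :=
  if s % 2 = 0 then
    2 * (1 - α) * kappaOdd j a c * poch (-(j : ℝ)) (s / 2) * poch (2 * a) (s / 2)
        * poch (a + 1) (s / 2) * poch (a - c - j) (s / 2) * poch (a + c) (s / 2) /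
      (poch (a + c) (j + 1) * poch (c - a) (j + 1) * poch (2 * a + 1) j
        * (Nat.factorial (s / 2)) * poch a (s / 2) * poch (2 * a + 1 + j) (s / 2)
        * poch (a - c + 1) (s / 2) * poch (a + c + j + 1) (s / 2))
  else
    -2 * α * kappaOdd j a c * poch (-(j : ℝ)) (s / 2) * poch (2 * c) (s / 2)
        * poch (c + 1) (s / 2) * poch (c - a - j) (s / 2) * poch (a + c) (s / 2) /
      (poch (a + c) (j + 1) * poch (a - c) (j + 1) * poch (2 * c + 1) j
        * (Nat.factorial (s / 2)) * poch c (s / 2) * poch (2 * c + 1 + j) (s / 2)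
        * poch (c - a + 1) (s / 2) * poch (a + c + j + 1) (s / 2))

/-!
The even weights are, up to a factor independent of `s`, the terms of Dougall's terminating
very-well-poised `₅F₄(1)` sum with `A = 2a`, `B = a - c - j`, `C = a + c`, `n = j`. Dougall's
evaluation follows from the Wilf–Zeilberger method; the WZ identity becomes an identity of rational
functions once every term in it is written as a multiple of the certificate. Inserting the value
and expanding `κ_N` leaves `1 - α`. Exchanging `a` and `c` flips the sign of `κ_N` and turns the
odd weights into the even ones with `α` replaced by `1 - α`.
-/

open Finset
open scoped Nat

lemma poch_eq_eval (z : ℝ) (k : ℕ) : poch z k = (ascPochhammer ℝ k).eval z := by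
  induction k with
  | zero => simp [poch]
  | succ k ih => rw [poch, prod_range_succ, ← poch, ih, ascPochhammer_succ_eval]

lemma poch_zero (z : ℝ) : poch z 0 = 1 := by simp [poch]

lemma poch_succ (z : ℝ) (k : ℕ) : poch z (k + 1) = poch z k * (z + k) := by
  simp only [poch_eq_eval, ascPochhammer_succ_eval]

lemma poch_succ' (z : ℝ) (k : ℕ) : poch z (k + 1) = z * poch (z + 1) k := by
  simp [poch_eq_eval, ascPochhammer_succ_left, eval_comp]

lemma poch_add (z : ℝ) (m n : ℕ) : poch z (m + n) = poch z m * poch (z + m) n := by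
  simp [poch_eq_eval, ← ascPochhammer_mul, eval_comp]

lemma poch_neg (z : ℝ) (k : ℕ) : poch (-z) k = (-1) ^ k * poch (z - k + 1) k := by
  rw [poch_eq_eval, ascPochhammer_eval_neg_eq_descPochhammer, descPochhammer_eval_eq_ascPochhammer,
    poch_eq_eval]

lemma factorial_mul_poch_natCast_add_one (n k : ℕ) : (n ! : ℝ) * poch (n + 1) k = (n + k)! := by
  rw [poch_eq_eval, ← Nat.cast_add_one, ascPochhammer_nat_eq_natCast_ascFactorial, ← Nat.cast_mul,
    Nat.factorial_mul_ascFactorial]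

lemma poch_neg_natCast_self_add_one (n : ℕ) : poch (-n) (n + 1) = 0 :=
  prod_eq_zero (self_mem_range_succ n) (neg_add_cancel _)

lemma poch_ne_zero_iff {z : ℝ} {k : ℕ} : poch z k ≠ 0 ↔ ∀ i < k, z + i ≠ 0 := by
  simp [poch, prod_ne_zero_iff]

lemma poch_ne_zero_of_le {z : ℝ} {k m : ℕ} (h : poch z m ≠ 0) (hk : k ≤ m) : poch z k ≠ 0 :=
  poch_ne_zero_iff.2 fun i hi => poch_ne_zero_iff.1 h i (hi.trans_le hk)

section Dougall

variable (A B C : ℝ)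

/-- The `s`-th term of Dougall's terminating very-well-poised `₅F₄(1)` with parameters
`A, 1 + A/2, B, C, -n`. -/
def dougallTerm (n s : ℕ) : ℝ :=
  (A + 2 * s) * poch (-n) s * poch A s * poch B s * poch C s /
    (A * s ! * poch (1 + A + n) s * poch (1 + A - B) s * poch (1 + A - C) s)

def dougallRatio (n : ℕ) : ℝ :=
  (1 + A + n) * (1 + A - B - C + n) / ((1 + A - B + n) * (1 + A - C + n))

/-- Wilf–Zeilberger certificate for `dougallTerm`: its forward difference in `s` is
`dougallTerm (n + 1) s - dougallRatio n * dougallTerm n s`. -/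
def dougallCert (n : ℕ) : ℕ → ℝ
  | 0 => 0
  | t + 1 => poch (-n) t * poch (A + 1) t * poch B (t + 1) * poch C (t + 1) /
      ((1 + A - B + n) * (1 + A - C + n) * t ! * poch (2 + A + n) t * poch (1 + A - B) t
        * poch (1 + A - C) t)

variable {A B C} {n t : ℕ}

lemma dougallTerm_zero (hA : A ≠ 0) (n : ℕ) : dougallTerm A B C n 0 = 1 := by
  simp [dougallTerm, poch_zero, hA]

lemma dougallTerm_self_add_one (n : ℕ) : dougallTerm A B C n (n + 1) = 0 := by
  simp [dougallTerm, poch_neg_natCast_self_add_one]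

lemma dougallCert_self_add_two (n : ℕ) : dougallCert A B C n (n + 2) = 0 := by
  simp [dougallCert, poch_neg_natCast_self_add_one]

lemma dougallTerm_succ_succ (hA : A ≠ 0) (hBn : 1 + A - B + n ≠ 0) (hCn : 1 + A - C + n ≠ 0)
    (hAt : poch (2 + A + n) (t + 1) ≠ 0) (hBt : poch (1 + A - B) (t + 1) ≠ 0)
    (hCt : poch (1 + A - C) (t + 1) ≠ 0) :
    dougallTerm A B C (n + 1) (t + 1) = dougallCert A B C n (t + 1) *
      ((1 + A - B + n) * (1 + A - C + n) * (A + 2 * t + 2) * (-n - 1) /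
        ((t + 1) * (2 + A + n + t) * (1 + A - B + t) * (1 + A - C + t))) := by
  simp only [poch_succ, mul_ne_zero_iff] at hAt hBt hCt
  simp only [dougallTerm, dougallCert, Nat.factorial_succ]
  push_cast
  rw [poch_succ' (-(n + 1 : ℝ)), show -((n : ℝ) + 1) + 1 = -n by ring, poch_succ' A,
    show 1 + A + ((n : ℝ) + 1) = 2 + A + n by ring, poch_succ (2 + A + n), poch_succ (1 + A - B),
    poch_succ (1 + A - C)]
  have ht : (t : ℝ) + 1 ≠ 0 := by positivity
  field_simp [hAt.1, hAt.2, hBt.1, hBt.2, hCt.1, hCt.2]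
  ring

lemma dougallTerm_succ (hA : A ≠ 0) (hn : 1 + A + n ≠ 0) (hBn : 1 + A - B + n ≠ 0)
    (hCn : 1 + A - C + n ≠ 0) (hAt : poch (2 + A + n) t ≠ 0) (hBt : poch (1 + A - B) (t + 1) ≠ 0)
    (hCt : poch (1 + A - C) (t + 1) ≠ 0) :
    dougallTerm A B C n (t + 1) = dougallCert A B C n (t + 1) *
      ((1 + A - B + n) * (1 + A - C + n) * (A + 2 * t + 2) * (t - n) /
        ((t + 1) * (1 + A + n) * (1 + A - B + t) * (1 + A - C + t))) := by
  simp only [poch_succ, mul_ne_zero_iff] at hBt hCt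
  simp only [dougallTerm, dougallCert, Nat.factorial_succ]
  push_cast
  rw [poch_succ (-n : ℝ), poch_succ' A, poch_succ' (1 + A + n),
    show 1 + A + (n : ℝ) + 1 = 2 + A + n by ring, poch_succ (1 + A - B), poch_succ (1 + A - C)]
  have ht : (t : ℝ) + 1 ≠ 0 := by positivity
  field_simp [hBt.1, hBt.2, hCt.1, hCt.2]
  ring

lemma dougallCert_succ (hBn : 1 + A - B + n ≠ 0) (hCn : 1 + A - C + n ≠ 0)
    (hAt : poch (2 + A + n) (t + 1) ≠ 0) (hBt : poch (1 + A - B) (t + 1) ≠ 0)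
    (hCt : poch (1 + A - C) (t + 1) ≠ 0) :
    dougallCert A B C n (t + 2) = dougallCert A B C n (t + 1) *
      ((t - n) * (A + 1 + t) * (B + t + 1) * (C + t + 1) /
        ((t + 1) * (2 + A + n + t) * (1 + A - B + t) * (1 + A - C + t))) := by
  simp only [poch_succ, mul_ne_zero_iff] at hAt hBt hCt
  simp only [dougallCert, Nat.factorial_succ]
  rw [poch_succ (-n : ℝ), poch_succ (A + 1), poch_succ B (t + 1), poch_succ C (t + 1),
    poch_succ (2 + A + n), poch_succ (1 + A - B), poch_succ (1 + A - C)]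
  push_cast
  have ht : (t : ℝ) + 1 ≠ 0 := by positivity
  field_simp [hAt.1, hAt.2, hBt.1, hBt.2, hCt.1, hCt.2]
  ring

lemma dougallTerm_wz (hA : poch A (2 * n + 3) ≠ 0) (hB : poch (1 + A - B) (n + 1) ≠ 0)
    (hC : poch (1 + A - C) (n + 1) ≠ 0) {s : ℕ} (hs : s ≤ n + 1) :
    dougallTerm A B C (n + 1) s - dougallRatio A B C n * dougallTerm A B C n s =
      dougallCert A B C n (s + 1) - dougallCert A B C n s := by
  have hfac : ∀ k ≤ 2 * n + 2, A + k ≠ 0 := fun k hk => poch_ne_zero_iff.1 hA k (by omega)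
  have hA0 : A ≠ 0 := by simpa using hfac 0 (by omega)
  have hn : 1 + A + n ≠ 0 := by simpa [add_comm, add_left_comm] using hfac (n + 1) (by omega)
  have hBn : 1 + A - B + n ≠ 0 := poch_ne_zero_iff.1 hB n (by omega)
  have hCn : 1 + A - C + n ≠ 0 := poch_ne_zero_iff.1 hC n (by omega)
  rcases s with _ | t
  · simp only [dougallTerm_zero hA0, dougallCert, dougallRatio, zero_add, poch_zero, poch_succ]
    field_simp
    ring
  have hAt : poch (2 + A + n) (t + 1) ≠ 0 := poch_ne_zero_iff.2 fun i hi => by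
    simpa [add_comm, add_left_comm, add_assoc] using hfac (n + 2 + i) (by omega)
  have hBt : poch (1 + A - B) (t + 1) ≠ 0 := poch_ne_zero_of_le hB hs
  have hCt : poch (1 + A - C) (t + 1) ≠ 0 := poch_ne_zero_of_le hC hs
  rw [dougallTerm_succ_succ hA0 hBn hCn hAt hBt hCt,
    dougallTerm_succ hA0 hn hBn hCn (poch_ne_zero_of_le hAt t.le_succ) hBt hCt,
    dougallCert_succ hBn hCn hAt hBt hCt]
  simp only [poch_succ, mul_ne_zero_iff] at hAt hBt hCt
  have ht : (t : ℝ) + 1 ≠ 0 := by positivity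
  simp only [dougallRatio]
  field_simp [hAt.2, hBt.2, hCt.2]
  ring

lemma dougall_sum_succ (hA : poch A (2 * n + 3) ≠ 0) (hB : poch (1 + A - B) (n + 1) ≠ 0)
    (hC : poch (1 + A - C) (n + 1) ≠ 0) :
    ∑ s ∈ range (n + 2), dougallTerm A B C (n + 1) s =
      dougallRatio A B C n * ∑ s ∈ range (n + 1), dougallTerm A B C n s := by
  have htele : ∑ s ∈ range (n + 2),
      (dougallTerm A B C (n + 1) s - dougallRatio A B C n * dougallTerm A B C n s) = 0 := by
    rw [sum_congr rfl fun s hs => dougallTerm_wz hA hB hC (Nat.lt_succ_iff.1 (mem_range.1 hs)),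
      sum_range_sub, dougallCert_self_add_two, dougallCert, sub_zero]
  rw [sum_sub_distrib, ← mul_sum, sum_range_succ (dougallTerm A B C n), dougallTerm_self_add_one,
    add_zero, sub_eq_zero] at htele
  exact htele

theorem sum_dougallTerm (hA : poch A (2 * n + 1) ≠ 0) (hB : poch (1 + A - B) n ≠ 0)
    (hC : poch (1 + A - C) n ≠ 0) :
    ∑ s ∈ range (n + 1), dougallTerm A B C n s =
      poch (1 + A) n * poch (1 + A - B - C) n / (poch (1 + A - B) n * poch (1 + A - C) n) := by
  induction n with
  | zero => simp [dougallTerm_zero (by simpa [poch] using hA), poch_zero]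
  | succ n ih =>
    rw [dougall_sum_succ hA hB hC, ih (poch_ne_zero_of_le hA (by omega)) (poch_ne_zero_of_le hB
      n.le_succ) (poch_ne_zero_of_le hC n.le_succ), dougallRatio]
    simp only [poch_succ, mul_ne_zero_iff] at hB hC ⊢
    field_simp [hB.1, hB.2, hC.1, hC.2]

end Dougall

lemma poch_natCast_add_one_self (j : ℕ) : poch (j + 1) j = (2 * j).choose j * j ! := by
  apply mul_left_cancel₀ (by positivity : (j ! : ℝ) ≠ 0)
  rw [factorial_mul_poch_natCast_add_one, two_mul, ← Nat.add_choose_mul_factorial_mul_factorial]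
  push_cast
  ring

lemma poch_sub_natCast_two_mul_add_one (x : ℝ) (j : ℕ) :
    poch (x - j) (2 * j + 1) = (-1) ^ (j + 1) * poch (-x) (j + 1) * poch (x + 1) j := by
  rw [show 2 * j + 1 = j + (j + 1) by omega, poch_add, sub_add_cancel, show x - j = -(j - x) by ring,
    poch_neg, show (j : ℝ) - x - j + 1 = -x + 1 by ring, poch_succ' x, poch_succ' (-x)]
  ring

lemma poch_add_one_div_poch {z : ℝ} {k : ℕ} (hz : z ≠ 0) (h : poch z k ≠ 0) :
    poch (z + 1) k / poch z k = (z + k) / z := by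
  rw [div_eq_div_iff h hz]
  linear_combination (poch_succ' z k).symm.trans (poch_succ z k)

lemma kappaOdd_swap (j : ℕ) (a c : ℝ) : kappaOdd j c a = -kappaOdd j a c := by
  have h : poch (c - a - j) (2 * j + 1) = -poch (a - c - j) (2 * j + 1) := by
    rw [show c - a - j = -(a - c + j) by ring, poch_neg,
      show a - c + j - ((2 * j + 1 : ℕ) : ℝ) + 1 = a - c - j by push_cast; ring, pow_succ, pow_mul]
    simp
  rw [kappaOdd, kappaOdd, h, add_comm c a]
  ring

lemma wOdd_two_mul_add_one (j : ℕ) (a c α : ℝ) (s : ℕ) :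
    wOdd j a c α (2 * s + 1) = wOdd j c a (1 - α) (2 * s) := by
  simp only [wOdd, show (2 * s + 1) % 2 = 1 by omega, Nat.mul_mod_right, one_ne_zero, ↓reduceIte,
    show (2 * s + 1) / 2 = s by omega, show 2 * s / 2 = s by omega, kappaOdd_swap j a c,
    add_comm c a]
  ring

section ParaRacah

variable {j : ℕ} {a c α : ℝ}

lemma wOdd_two_mul (ha : a ≠ 0) {s : ℕ} (hs : poch a s ≠ 0) :
    wOdd j a c α (2 * s) = 2 * (1 - α) * kappaOdd j a c /
      (poch (a + c) (j + 1) * poch (c - a) (j + 1) * poch (2 * a + 1) j) *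
        dougallTerm (2 * a) (a - c - j) (a + c) j s := by
  calc wOdd j a c α (2 * s)
      = 2 * (1 - α) * kappaOdd j a c /
          (poch (a + c) (j + 1) * poch (c - a) (j + 1) * poch (2 * a + 1) j) *
        (poch (-j) s * poch (2 * a) s * poch (a - c - j) s * poch (a + c) s /
          (s ! * poch (2 * a + 1 + j) s * poch (a - c + 1) s * poch (a + c + j + 1) s)) *
        (poch (a + 1) s / poch a s) := by
        simp only [wOdd, Nat.mul_mod_right, show 2 * s / 2 = s by omega, if_true]
        ring
    _ = _ := by
        rw [poch_add_one_div_poch ha hs, dougallTerm, show 1 + 2 * a + j = 2 * a + 1 + j by ring,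
          show 1 + 2 * a - (a - c - j) = a + c + j + 1 by ring,
          show 1 + 2 * a - (a + c) = a - c + 1 by ring]
        ring

lemma sum_wOdd_two_mul (hj : 1 ≤ j) (hp₁ : poch (a + c) (j + 1) ≠ 0)
    (hp₂ : poch (c - a) (j + 1) ≠ 0) (hp₄ : poch (2 * a + 1) j ≠ 0) (hp₆ : poch a j ≠ 0)
    (hp₇ : poch (2 * a + 1 + j) j ≠ 0) (hp₈ : poch (a - c + 1) j ≠ 0)
    (hp₉ : poch (a + c + j + 1) j ≠ 0) :
    ∑ s ∈ range (j + 1), wOdd j a c α (2 * s) = 1 - α := by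
  have ha : a ≠ 0 := by simpa using poch_ne_zero_iff.1 hp₆ 0 hj
  have hA : poch (2 * a) (2 * j + 1) ≠ 0 := by
    rw [poch_succ', two_mul j, poch_add]
    exact mul_ne_zero (mul_ne_zero two_ne_zero ha) (mul_ne_zero hp₄ hp₇)
  have hB : 1 + 2 * a - (a - c - j) = a + c + j + 1 := by ring
  have hC : 1 + 2 * a - (a + c) = a - c + 1 := by ring
  rw [sum_congr rfl fun s hs => wOdd_two_mul ha (poch_ne_zero_of_le hp₆ (mem_range_succ_iff.1 hs)),
    ← mul_sum, sum_dougallTerm hA (by rwa [hB]) (by rwa [hC]), hB, hC,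
    show a + c + j + 1 - (a + c) = (j : ℝ) + 1 by ring, add_comm 1 (2 * a),
    poch_natCast_add_one_self, kappaOdd, poch_sub_natCast_two_mul_add_one, neg_sub,
    show 2 * j + 1 = (j + 1) + j by omega, poch_add (a + c), Nat.cast_add_one, ← add_assoc]
  have hchoose : ((2 * j).choose j : ℝ) ≠ 0 := Nat.cast_ne_zero.2 (Nat.choose_pos (by omega)).ne'
  field_simp

end ParaRacah

theorem paraRacahOdd_weight_sums_general (j : ℕ) (hj : 1 ≤ j) (a c α : ℝ)
    (hp₁ : poch (a + c) (j + 1) ≠ 0) (hp₂ : poch (c - a) (j + 1) ≠ 0)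
    (hp₃ : poch (a - c) (j + 1) ≠ 0) (hp₄ : poch (2 * a + 1) j ≠ 0)
    (hp₅ : poch (2 * c + 1) j ≠ 0) (hp₆ : poch a j ≠ 0)
    (hp₇ : poch (2 * a + 1 + j) j ≠ 0) (hp₈ : poch (a - c + 1) j ≠ 0)
    (hp₉ : poch (a + c + j + 1) j ≠ 0) (hp₁₀ : poch c j ≠ 0)
    (hp₁₁ : poch (2 * c + 1 + j) j ≠ 0) (hp₁₂ : poch (c - a + 1) j ≠ 0) :
    (∑ s ∈ Finset.range (j + 1), wOdd j a c α (2 * s)) = 1 - α ∧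
    (∑ s ∈ Finset.range (j + 1), wOdd j a c α (2 * s + 1)) = α := by
  refine ⟨sum_wOdd_two_mul hj hp₁ hp₂ hp₄ hp₆ hp₇ hp₈ hp₉, ?_⟩
  simp only [wOdd_two_mul_add_one]
  rw [sum_wOdd_two_mul hj (by rwa [add_comm]) hp₃ hp₅ hp₁₀ hp₁₁ hp₁₂ (by rwa [add_comm c a]),
    sub_sub_cancel]

theorem paraRacahOdd_weight_sums (j : ℕ) (hj : 1 ≤ j) (a c α : ℝ)
    (hα₀ : 0 < α) (hα₁ : α < 1) (hac : a ≠ c) (hacj : a + c + (j : ℝ) ≠ 0)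
    (hcase :
      (-(2 * (j : ℝ) + 1) < a + c ∧ a + c < -(j : ℝ) + 1 ∧ |c - a| > (j : ℝ)) ∨
      ((a + c < -(2 * (j : ℝ) + 1) + 1 ∨ 0 < a + c) ∧ |c - a| < 1))
    (hp₁ : poch (a + c) (j + 1) ≠ 0) (hp₂ : poch (c - a) (j + 1) ≠ 0)
    (hp₃ : poch (a - c) (j + 1) ≠ 0) (hp₄ : poch (2 * a + 1) j ≠ 0)
    (hp₅ : poch (2 * c + 1) j ≠ 0) (hp₆ : poch a j ≠ 0)
    (hp₇ : poch (2 * a + 1 + j) j ≠ 0) (hp₈ : poch (a - c + 1) j ≠ 0)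
    (hp₉ : poch (a + c + j + 1) j ≠ 0) (hp₁₀ : poch c j ≠ 0)
    (hp₁₁ : poch (2 * c + 1 + j) j ≠ 0) (hp₁₂ : poch (c - a + 1) j ≠ 0) :
    (∑ s ∈ Finset.range (j + 1), wOdd j a c α (2 * s)) = 1 - α ∧
    (∑ s ∈ Finset.range (j + 1), wOdd j a c α (2 * s + 1)) = α :=
  paraRacahOdd_weight_sums_general j hj a c α hp₁ hp₂ hp₃ hp₄ hp₅ hp₆ hp₇ hp₈ hp₉ hp₁₀ hp₁₁ hp₁₂
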